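/- arXiv:1605.02328 — 3 statements merged into one kernel-verified Lean document; each statement's English description precedes it below -/
import Mathlib

section
/- If a triple (t, r, q) of nonzero polynomials in ℚ[x] parameterizes a complete family of pairing-friendly elliptic curves with embedding degree k = 4 and CM discriminant D = 1, then ρ(t, r, q) ≥ 2, i.e., deg q ≥ 2·deg r. -/
open Polynomial

/-- `f ∈ ℚ[x]` represents integers: there is an integer `a` with `f(a) ∈ ℤ`. -/
def RepresentsIntegers (f : ℚ[X]) : Prop :=
  ∃ a n : ℤ, f.eval (a : ℚ) = (n : ℚ)

/-- `f ∈ ℚ[x]` represents primes: `f` is nonconstant, irreducible over `ℚ`,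
has positive leading coefficient, represents integers, and no prime number
divides every integer value `f(a)` with `a ∈ ℤ`, `f(a) ∈ ℤ`. -/
def RepresentsPrimes (f : ℚ[X]) : Prop :=
  0 < f.natDegree ∧ Irreducible f ∧ 0 < f.leadingCoeff ∧ RepresentsIntegers f ∧
    ∀ p : ℕ, p.Prime → ∃ a n : ℤ, f.eval (a : ℚ) = (n : ℚ) ∧ ¬ (p : ℤ) ∣ n

/-- `(t, r, q)` parameterizes a complete family of pairing-friendly elliptic curves
with embedding degree `k` and CM discriminant `D`:
(i) `r` represents primes; (ii) `q` represents primes; (iii) `r ∣ q + 1 - t`;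
(iv) `r ∣ Φ_k(t - 1)`; (v) `D·y² = 4q - t²` for some `y ∈ ℚ[x]`. -/
def IsCompleteFamily (k D : ℕ) (t r q : ℚ[X]) : Prop :=
  t ≠ 0 ∧ r ≠ 0 ∧ q ≠ 0 ∧
  RepresentsPrimes r ∧ RepresentsPrimes q ∧
  r ∣ (q + 1 - t) ∧
  r ∣ (cyclotomic k ℚ).comp (t - 1) ∧
  ∃ y : ℚ[X], (D : ℚ[X]) * y ^ 2 = 4 * q - t ^ 2

/-- If `2·q = s²` with `q` irreducible of positive degree, contradiction. -/
lemma aux_sq (q s : ℚ[X]) (hq : Irreducible q) (hd : 0 < q.natDegree)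
    (h : 2 * q = s ^ 2) : False := by
  have hq0 : q ≠ 0 := fun h' => by simp [h'] at hd
  have hs0 : s ≠ 0 := by
    rintro rfl
    have h0 : (2 : ℚ[X]) * q = 0 := by simpa using h
    rcases mul_eq_zero.mp h0 with h1 | h1
    · norm_num at h1
    · exact hq0 h1
  have hqp : Prime q := hq.prime
  have hdvd : q ∣ s ^ 2 := ⟨2, by linear_combination -h⟩
  have hqt : q ∣ s := hqp.dvd_of_dvd_pow hdvd
  have h1 : q.natDegree ≤ s.natDegree := natDegree_le_of_dvd hqt hs0
  have h2 : q.natDegree = 2 * s.natDegree := by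
    have h3 := congrArg natDegree h
    rw [natDegree_mul (by norm_num) hq0, natDegree_ofNat, zero_add, natDegree_pow] at h3
    omega
  omega

lemma cyclotomic_four : cyclotomic 4 ℚ = X ^ 2 + 1 := by
  have := cyclotomic_prime_pow_eq_geom_sum (R := ℚ) (p := 2) (n := 1) Nat.prime_two
  norm_num at this
  exact this

/-- A complete family with embedding degree 4 and CM discriminant 1 has `ρ ≥ 2`. -/
theorem rho_ge_two_k4_D1 (t r q : ℚ[X]) (h : IsCompleteFamily 4 1 t r q) :
    2 * r.natDegree ≤ q.natDegree := by
  obtain ⟨ht0, hr0, hq0, hrp, hqp, hdiv1, hdiv4, y, hy⟩ := h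
  have hqirr : Irreducible q := hqp.2.1
  have hqdeg : 0 < q.natDegree := hqp.1
  have hy' : 4 * q = t ^ 2 + y ^ 2 := by
    have h1 : (1 : ℚ[X]) * y ^ 2 = 4 * q - t ^ 2 := by
      simpa using hy
    linear_combination -h1
  -- r divides (t-1)^2 + 1
  have hrdvd2 : r ∣ (t - 1) ^ 2 + 1 := by
    have : (cyclotomic 4 ℚ).comp (t - 1) = (t - 1) ^ 2 + 1 := by
      rw [cyclotomic_four]; simp [pow_comp]
    rwa [this] at hdiv4
  -- key algebraic identity
  have hkey : (y - t) * (y + t) = 4 * (q + 1 - t) - 2 * ((t - 1) ^ 2 + 1) := by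
    linear_combination -hy'
  have hrfac : r ∣ (y - t) * (y + t) := by
    rw [hkey]
    exact dvd_sub (Dvd.dvd.mul_left hdiv1 4) (Dvd.dvd.mul_left hrdvd2 2)
  have hrprime : Prime r := hrp.2.1.prime
  -- y ≠ t and y ≠ -t
  have hyt : y ≠ t := by
    rintro rfl
    refine aux_sq q y hqirr hqdeg ?_
    have h2 : (2 : ℚ[X]) * (2 * q) = 2 * y ^ 2 := by linear_combination hy'
    exact mul_left_cancel₀ (by norm_num) h2
  have hynt : y ≠ -t := by
    rintro rfl
    refine aux_sq q t hqirr hqdeg ?_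
    have h2 : (2 : ℚ[X]) * (2 * q) = 2 * t ^ 2 := by linear_combination hy'
    exact mul_left_cancel₀ (by norm_num) h2
  -- degree of r is at most m := max (deg t) (deg y)
  set m := max t.natDegree y.natDegree with hm
  have hrm : r.natDegree ≤ m := by
    rcases hrprime.dvd_mul.mp hrfac with hd | hd
    · have hne : y - t ≠ 0 := sub_ne_zero.mpr hyt
      calc r.natDegree ≤ (y - t).natDegree := natDegree_le_of_dvd hd hne
        _ ≤ max y.natDegree t.natDegree := natDegree_sub_le y t
        _ ≤ m := by omega
    · have hne : y + t ≠ 0 := by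
        intro h0
        exact hynt (by linear_combination h0)
      calc r.natDegree ≤ (y + t).natDegree := natDegree_le_of_dvd hd hne
        _ ≤ max y.natDegree t.natDegree := natDegree_add_le y t
        _ ≤ m := by omega
  -- degree of q is 2 * m
  have hsum : (t ^ 2 + y ^ 2).natDegree = 2 * m := by
    apply le_antisymm
    · refine le_trans (natDegree_add_le _ _) ?_
      rw [natDegree_pow, natDegree_pow]
      omega
    · apply le_natDegree_of_ne_zero
      have hct : (t ^ 2).coeff (2 * m) = if t.natDegree = m then t.leadingCoeff ^ 2 else 0 := by
        split_ifs with hh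
        · rw [← hh, ← natDegree_pow, ← leadingCoeff, leadingCoeff_pow]
        · exact coeff_eq_zero_of_natDegree_lt (by rw [natDegree_pow]; omega)
      have hcy : (y ^ 2).coeff (2 * m) = if y.natDegree = m then y.leadingCoeff ^ 2 else 0 := by
        split_ifs with hh
        · rw [← hh, ← natDegree_pow, ← leadingCoeff, leadingCoeff_pow]
        · exact coeff_eq_zero_of_natDegree_lt (by rw [natDegree_pow]; omega)
      rw [coeff_add, hct, hcy]
      rcases max_cases t.natDegree y.natDegree with ⟨he, _⟩ | ⟨he, hlt⟩
      · have htm : t.natDegree = m := by omega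
        have h1 : (0:ℚ) < t.leadingCoeff ^ 2 := by
          have := leadingCoeff_ne_zero.mpr ht0
          positivity
        have h2 : (0:ℚ) ≤ (if y.natDegree = m then y.leadingCoeff ^ 2 else 0) := by
          split_ifs <;> positivity
        rw [if_pos htm]
        positivity
      · have hym : y.natDegree = m := by omega
        have hy0 : y ≠ 0 := by
          intro h0
          rw [h0, natDegree_zero] at hym
          omega
        have h1 : (0:ℚ) < y.leadingCoeff ^ 2 := by
          have := leadingCoeff_ne_zero.mpr hy0
          positivity
        have h2 : (0:ℚ) ≤ (if t.natDegree = m then t.leadingCoeff ^ 2 else 0) := by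
          split_ifs <;> positivity
        rw [if_pos hym]
        positivity
  have hqdeg2 : q.natDegree = 2 * m := by
    have h4 : (4 * q).natDegree = q.natDegree := by
      rw [natDegree_mul (by norm_num) hq0, natDegree_ofNat, zero_add]
    rw [← h4, hy', hsum]
  omega
end

section
/- Let D be a squarefree positive integer with D ≠ 3. Suppose (t, r, q) parameterizes a complete family of pairing-friendly elliptic curves with embedding degree k = 6 and CM discriminant D such that r(x) = Φ_6(t(x) − 1) and deg q = deg r (i.e., ρ(t, r, q) = 1). Then every y ∈ ℚ[x] with D·y² = 4q − t² satisfies 2·deg y = deg t. -/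
open Polynomial

/-!
Write `r = Φ₆(t - 1) = t² - 3t + 3`, so `deg r = 2 deg t`. Since `deg (q + 1 - t) ≤ deg r`, the
divisibility `r ∣ q + 1 - t` makes `q = c r + t - 1` for a constant `c`, and `c ≠ 0` because
`deg q = deg r`. The CM equation becomes `D y² = (4c - 1) t² + (4 - 12c) t + 12c - 4`. If `c = 1/3`
this says `3D y² = t²`, impossible for squarefree `D ≠ 3`. For any other `c ≠ 1/4`, completing the
square gives `A² - (4c - 1) D y² = 4c(1 - 3c) ≠ 0` with `deg A = deg t`; over an algebraically
closed field the left side factors, so both factors are units and `t` would be constant. Hence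
`c = 1/4` and `D y² = t - 1`.
-/

theorem Nat.eq_of_squarefree_of_isSquare_mul {p D : ℕ} (hp : p.Prime) (hD : Squarefree D)
    (hsq : IsSquare (p * D)) : D = p := by
  obtain ⟨m, hm⟩ := hsq
  obtain ⟨k, rfl⟩ : p ∣ m := (hp.dvd_mul.mp ⟨D, hm.symm⟩).elim id id
  have hD_eq : D = k * k * p := by
    apply Nat.eq_of_mul_eq_mul_left hp.pos
    linear_combination hm
  have hk : k = 1 := Nat.isUnit_iff.mp (hD k ⟨p, hD_eq⟩)
  simpa [hk] using hD_eq

namespace Polynomial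

variable {K : Type*} [Field K]

theorem exists_eq_C_mul_of_dvd_of_natDegree_le {p r : K[X]} (hdvd : r ∣ p)
    (hdeg : p.natDegree ≤ r.natDegree) : ∃ c : K, p = C c * r := by
  obtain ⟨g, rfl⟩ := hdvd
  obtain rfl | hr := eq_or_ne r 0
  · exact ⟨0, by simp⟩
  obtain rfl | hg := eq_or_ne g 0
  · exact ⟨0, by simp⟩
  rw [natDegree_mul hr hg] at hdeg
  exact ⟨g.coeff 0, by rw [mul_comm, ← eq_C_of_natDegree_eq_zero (by omega)]⟩

theorem isSquare_of_C_mul_sq_eq_sq {a : K} {y t : K[X]} (ht : t ≠ 0)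
    (h : C a * y ^ 2 = t ^ 2) : IsSquare a := by
  have hy : y.leadingCoeff ≠ 0 := by
    rintro hy
    rw [leadingCoeff_eq_zero.mp hy, zero_pow two_ne_zero, mul_zero, eq_comm] at h
    exact ht (pow_eq_zero_iff two_ne_zero |>.mp h)
  have hlc := congrArg leadingCoeff h
  rw [leadingCoeff_mul, leadingCoeff_C, leadingCoeff_pow, leadingCoeff_pow] at hlc
  exact ⟨t.leadingCoeff / y.leadingCoeff, by field_simp; linear_combination hlc⟩

theorem natDegree_eq_zero_of_sq_sub_sq_eq_C [NeZero (2 : K)] {A B : K[X]} {c : K} (hc : c ≠ 0)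
    (h : A ^ 2 - B ^ 2 = C c) : A.natDegree = 0 := by
  have hunit : IsUnit ((A - B) * (A + B)) := by
    rw [mul_comm, ← sq_sub_sq, h]
    exact isUnit_C.mpr hc.isUnit
  have h2A : C 2 * A = (A - B) + (A + B) := by rw [C_ofNat]; ring
  rw [← natDegree_C_mul (two_ne_zero (α := K)), h2A]
  refine Nat.le_zero.mp <| natDegree_add_le_of_degree_le ?_ ?_
  · exact (natDegree_eq_zero_of_isUnit (isUnit_of_mul_isUnit_left hunit)).le
  · exact (natDegree_eq_zero_of_isUnit (isUnit_of_mul_isUnit_right hunit)).le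

theorem natDegree_eq_zero_of_sq_sub_C_mul_sq_eq_C [CharZero K] {A Y : K[X]} {a c : K}
    (hc : c ≠ 0) (h : A ^ 2 - C a * Y ^ 2 = C c) : A.natDegree = 0 := by
  let ι := algebraMap K (AlgebraicClosure K)
  obtain ⟨s, hs⟩ := IsAlgClosed.exists_pow_nat_eq (ι a) two_pos
  have h' : (A.map ι) ^ 2 - (C s * Y.map ι) ^ 2 = C (ι c) := by
    rw [mul_pow, ← C_pow, hs]
    simpa using congrArg (map ι) h
  rw [← natDegree_map_eq_of_injective ι.injective A]
  exact natDegree_eq_zero_of_sq_sub_sq_eq_C (by simpa [ι] using hc) h'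

end Polynomial

theorem cyclotomic_six_comp_sub_one (t : ℚ[X]) :
    (cyclotomic 6 ℚ).comp (t - 1) = t ^ 2 - 3 * t + 3 := by
  rw [cyclotomic_six]
  simp only [sub_comp, add_comp, pow_comp, X_comp, one_comp]
  ring

theorem natDegree_cyclotomic_six_comp_sub_one (t : ℚ[X]) :
    ((cyclotomic 6 ℚ).comp (t - 1)).natDegree = 2 * t.natDegree := by
  rw [natDegree_comp, natDegree_cyclotomic, ← C_1, natDegree_sub_C]
  rfl

theorem eq_inv_four_of_cm_equation {D : ℕ} (hD : Squarefree D) (hD3 : D ≠ 3) {t y : ℚ[X]} {c : ℚ}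
    (ht : 0 < t.natDegree) (hc : c ≠ 0)
    (h : C (D : ℚ) * y ^ 2 = 4 * (C c * (t ^ 2 - 3 * t + 3) + t - 1) - t ^ 2) : c = 4⁻¹ := by
  by_contra hc4
  by_cases hc3 : c = 3⁻¹
  · subst hc3
    have h3 : C ((3 * D : ℕ) : ℚ) * y ^ 2 = t ^ 2 := by
      have h3 : (3 : ℚ[X]) * C 3⁻¹ = 1 := by rw [← C_ofNat, ← C_mul]; norm_num
      rw [Nat.cast_mul, Nat.cast_ofNat, C_mul, C_ofNat]
      linear_combination 3 * h + (4 * t ^ 2 - 12 * t + 12) * h3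
    have hsq := isSquare_of_C_mul_sq_eq_sq (ne_zero_of_natDegree_gt ht) h3
    exact hD3 (Nat.eq_of_squarefree_of_isSquare_mul Nat.prime_three hD
      (Rat.isSquare_natCast_iff.mp hsq))
  · have ha : 4 * c - 1 ≠ 0 := fun ha => hc4 (by linear_combination ha / 4)
    have hpell : (C (4 * c - 1) * t - C (6 * c - 2)) ^ 2 - C ((4 * c - 1) * D) * y ^ 2
        = C (4 * c * (1 - 3 * c)) := by
      simp only [map_mul, map_sub, map_one, C_ofNat] at h ⊢
      linear_combination (1 - 4 * C c) * h
    have hconst : 4 * c * (1 - 3 * c) ≠ 0 :=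
      mul_ne_zero (mul_ne_zero four_ne_zero hc) fun h3 => hc3 (by linear_combination -h3 / 3)
    have := natDegree_eq_zero_of_sq_sub_C_mul_sq_eq_C hconst hpell
    rw [natDegree_sub_C, natDegree_C_mul ha] at this
    omega

theorem deg_y_k6_general (D : ℕ) (hD : Squarefree D) (hD3 : D ≠ 3)
    (t r q : ℚ[X]) (h : IsCompleteFamily 6 D t r q)
    (hr : r = (cyclotomic 6 ℚ).comp (t - 1))
    (hdeg : q.natDegree = r.natDegree) :
    ∀ y : ℚ[X], (D : ℚ[X]) * y ^ 2 = 4 * q - t ^ 2 → 2 * y.natDegree = t.natDegree := by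
  obtain ⟨-, -, -, ⟨hr_pos, -⟩, -, hdvd, -, -⟩ := h
  intro y hy
  have hr_deg : r.natDegree = 2 * t.natDegree := hr ▸ natDegree_cyclotomic_six_comp_sub_one t
  have ht : 0 < t.natDegree := by omega
  have hq_deg : (q + 1 - t).natDegree ≤ r.natDegree := by
    refine (natDegree_sub_le _ _).trans (max_le (natDegree_add_le_of_degree_le hdeg.le ?_) ?_)
    · simp
    · omega
  obtain ⟨c, hc⟩ := exists_eq_C_mul_of_dvd_of_natDegree_le hdvd hq_deg
  have hq : q = C c * r + t - 1 := by linear_combination hc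
  have hc0 : c ≠ 0 := by
    rintro rfl
    have : q.natDegree = t.natDegree := by rw [hq, C_0, zero_mul, zero_add, ← C_1, natDegree_sub_C]
    omega
  rw [← C_eq_natCast, hq, hr, cyclotomic_six_comp_sub_one] at hy
  have hDy : C (D : ℚ) * y ^ 2 = t - 1 := by
    have h4 : (4 : ℚ[X]) * C 4⁻¹ = 1 := by rw [← C_ofNat, ← C_mul]; norm_num
    rw [eq_inv_four_of_cm_equation hD hD3 ht hc0 hy] at hy
    linear_combination hy + (t ^ 2 - 3 * t + 3) * h4
  calc 2 * y.natDegree = (C (D : ℚ) * y ^ 2).natDegree := by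
        rw [natDegree_C_mul (by exact_mod_cast hD.ne_zero), natDegree_pow]
    _ = t.natDegree := by rw [hDy, ← C_1, natDegree_sub_C]

/-- Lemma 3.1 for `k = 6`: in an ideal family with `r = Φ_6(t - 1)` and `D ≠ 3`,
any CM polynomial `y` satisfies `2 deg y = deg t`. -/
theorem deg_y_k6 (D : ℕ) (hD : Squarefree D) (hDpos : 0 < D) (hD3 : D ≠ 3)
    (t r q : ℚ[X]) (h : IsCompleteFamily 6 D t r q)
    (hr : r = (cyclotomic 6 ℚ).comp (t - 1))
    (hdeg : q.natDegree = r.natDegree) :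
    ∀ y : ℚ[X], (D : ℚ[X]) * y ^ 2 = 4 * q - t ^ 2 → 2 * y.natDegree = t.natDegree :=
  deg_y_k6_general D hD hD3 t r q h hr hdeg
end

section
/- If a triple (t, r, q) of nonzero polynomials in ℚ[x] parameterizes a complete family of pairing-friendly elliptic curves with embedding degree k = 12 and CM discriminant D = 3, and deg r ≠ 2·deg t, then ρ(t, r, q) ≠ 1, i.e., deg q ≠ deg r. -/
open Polynomial

lemma cyclotomic_three_rat : cyclotomic 3 ℚ = X ^ 2 + X + 1 := by
  rw [cyclotomic_prime ℚ 3]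
  simp [Finset.sum_range_succ]
  ring

lemma cyclotomic_six_rat : cyclotomic 6 ℚ = X ^ 2 - X + 1 := by
  have key := cyclotomic_expand_eq_cyclotomic_mul (p := 2) (n := 3)
    Nat.prime_two (by norm_num) ℚ
  rw [cyclotomic_three_rat] at key
  have hexp : expand ℚ 2 (X ^ 2 + X + 1 : ℚ[X]) = (X ^ 2 - X + 1) * (X ^ 2 + X + 1) := by
    simp [map_add, map_pow, Polynomial.expand_X]
    ring
  rw [hexp] at key
  have hne : (X ^ 2 + X + 1 : ℚ[X]) ≠ 0 := by
    intro h
    have := congrArg (eval 0) h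
    simp at this
  exact (mul_right_cancel₀ hne key).symm

lemma cyclotomic_twelve_rat : cyclotomic 12 ℚ = X ^ 4 - X ^ 2 + 1 := by
  have key := cyclotomic_expand_eq_cyclotomic (p := 2) (n := 6)
    Nat.prime_two (by norm_num) ℚ
  rw [cyclotomic_six_rat] at key
  rw [show (12 : ℕ) = 6 * 2 from rfl, ← key]
  simp [map_add, map_sub, map_pow, Polynomial.expand_X]
  ring

/-- Key degree lemma: if `r ∣ (t-1)² + 1 - 3yt` with `2·deg t < deg r = 2·deg y`,
we get a contradiction, since the dividend is nonzero of degree `deg y + deg t < deg r`. -/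
lemma aux_deg (r t y : ℚ[X]) (ht0 : t ≠ 0) (hy0 : y ≠ 0)
    (h1 : 2 * t.natDegree < r.natDegree) (h2 : 2 * y.natDegree = r.natDegree)
    (hdvd : r ∣ (t - 1) ^ 2 + 1 - 3 * (y * t)) : False := by
  have hd : t.natDegree < y.natDegree := by omega
  have h3 : (3 : ℚ[X]) = C (3 : ℚ) := (map_ofNat C 3).symm
  have h3yt : ((3 : ℚ[X]) * (y * t)).natDegree = y.natDegree + t.natDegree := by
    rw [h3, natDegree_C_mul (by norm_num : (3:ℚ) ≠ 0), natDegree_mul hy0 ht0]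
  have hA : ((t - 1) ^ 2 + 1).natDegree ≤ 2 * t.natDegree := by
    refine le_trans (natDegree_add_le _ _) ?_
    simp only [natDegree_one, natDegree_pow]
    have : (t - 1).natDegree ≤ t.natDegree := by
      refine le_trans (natDegree_sub_le _ _) ?_
      simp
    omega
  have hlt : ((t - 1) ^ 2 + 1).natDegree < ((3 : ℚ[X]) * (y * t)).natDegree := by omega
  have hgdeg : ((t - 1) ^ 2 + 1 - 3 * (y * t)).natDegree = y.natDegree + t.natDegree := by
    rw [natDegree_sub_eq_right_of_natDegree_lt hlt, h3yt]
  have hg0 : (t - 1) ^ 2 + 1 - 3 * (y * t) ≠ 0 := by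
    intro h0
    rw [h0] at hgdeg
    simp at hgdeg
    omega
  have := Polynomial.natDegree_le_of_dvd hdvd hg0
  rw [hgdeg] at this
  omega

/-- No ideal complete family with embedding degree 12 and CM discriminant 3 when
`deg r ≠ 2 deg t`. -/
theorem no_ideal_family_k12_D3 (t r q : ℚ[X]) (h : IsCompleteFamily 12 3 t r q)
    (hdeg : r.natDegree ≠ 2 * t.natDegree) :
    q.natDegree ≠ r.natDegree := by
  obtain ⟨ht0, hr0, hq0, hrp, hqp, hdvd1, hdvd2, y, hy⟩ := h
  obtain ⟨hrdeg, hrirr, hrlc, -, -⟩ := hrp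
  intro hqr
  have hy' : (3 : ℚ[X]) * y ^ 2 = 4 * q - t ^ 2 := by
    push_cast at hy
    exact hy
  have ht20 : t ^ 2 ≠ 0 := pow_ne_zero _ ht0
  have h4C : (4 : ℚ[X]) = C (4 : ℚ) := (map_ofNat C 4).symm
  have h4q : (4 * q).natDegree = q.natDegree := by
    rw [h4C, natDegree_C_mul (by norm_num : (4:ℚ) ≠ 0)]
  have h4q0 : 4 * q ≠ 0 := by
    rw [h4C]
    exact mul_ne_zero (C_ne_zero.mpr (by norm_num)) hq0
  -- `y ≠ 0`, else `4q = t²` and `deg q = 2 deg t`, contradicting `hdeg`.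
  have hy0 : y ≠ 0 := by
    intro h0
    rw [h0] at hy'
    have h42 : 4 * q = t ^ 2 := by linear_combination -hy'
    have hqd : q.natDegree = 2 * t.natDegree := by
      have := congrArg natDegree h42
      rwa [h4q, natDegree_pow] at this
    exact hdeg (by rw [← hqr, hqd])
  have h3C : (3 : ℚ[X]) = C (3 : ℚ) := (map_ofNat C 3).symm
  have h3y2deg : ((3 : ℚ[X]) * y ^ 2).natDegree = 2 * y.natDegree := by
    rw [h3C, natDegree_C_mul (by norm_num : (3:ℚ) ≠ 0), natDegree_pow]
  -- `2 deg t ≤ deg q`: otherwise `3y² = 4q - t²` has negative leading coefficient.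
  have hnot : ¬ (q.natDegree < 2 * t.natDegree) := by
    intro hlt
    have hdeglt : (4 * q).degree < (t ^ 2).degree := by
      apply degree_lt_degree
      rw [h4q, natDegree_pow]
      omega
    have hlc : ((3 : ℚ[X]) * y ^ 2).leadingCoeff = -(t ^ 2).leadingCoeff := by
      rw [hy']
      exact leadingCoeff_sub_of_degree_lt' hdeglt
    rw [h3C, leadingCoeff_mul, leadingCoeff_C, leadingCoeff_pow, leadingCoeff_pow] at hlc
    have hlct : t.leadingCoeff ≠ 0 := leadingCoeff_ne_zero.mpr ht0
    have h1 : (0:ℚ) < t.leadingCoeff ^ 2 := by positivity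
    have h2 : (0:ℚ) ≤ 3 * y.leadingCoeff ^ 2 := by positivity
    linarith
  have h2dn : 2 * t.natDegree < r.natDegree := by
    rcases lt_trichotomy (2 * t.natDegree) q.natDegree with hc | hc | hc
    · omega
    · exact absurd (by rw [← hqr, ← hc]) hdeg
    · exact absurd hc hnot
  -- hence `deg (4q - t²) = deg q = deg r`, so `2 deg y = deg r`.
  have hn2m : 2 * y.natDegree = r.natDegree := by
    have hql : (4 * q - t ^ 2).natDegree = q.natDegree := by
      rw [← h4q]
      apply natDegree_sub_eq_left_of_natDegree_lt
      rw [h4q, natDegree_pow]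
      omega
    rw [← hy', h3y2deg] at hql
    omega
  -- work in the field `K = ℚ[X]/(r)`
  haveI : Fact (Irreducible r) := ⟨hrirr⟩
  have hdvd2' : r ∣ (t - 1) ^ 4 - (t - 1) ^ 2 + 1 := by
    rw [cyclotomic_twelve_rat] at hdvd2
    simp only [add_comp, sub_comp, pow_comp, X_comp, one_comp] at hdvd2
    exact hdvd2
  set T := AdjoinRoot.mk r t with hTdef
  set Ym := AdjoinRoot.mk r y with hYdef
  -- `ζ := T - 1` is a primitive 12th root of unity in `K`
  have hz : (T - 1) ^ 4 - (T - 1) ^ 2 + 1 = 0 := by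
    have h0 : AdjoinRoot.mk r ((t - 1) ^ 4 - (t - 1) ^ 2 + 1) = 0 :=
      AdjoinRoot.mk_eq_zero.mpr hdvd2'
    simp only [map_add, map_sub, map_pow, map_one] at h0
    exact h0
  have hq1 : AdjoinRoot.mk r q = T - 1 := by
    have h0 : AdjoinRoot.mk r (q + 1 - t) = 0 := AdjoinRoot.mk_eq_zero.mpr hdvd1
    rw [map_sub, map_add, map_one] at h0
    linear_combination h0
  have hYm : (3 : AdjoinRoot r) * Ym ^ 2 = 4 * (T - 1) - T ^ 2 := by
    have h0 := congrArg (AdjoinRoot.mk r) hy'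
    rw [map_mul, map_pow, map_sub, map_mul, map_pow, map_ofNat, map_ofNat, hq1] at h0
    exact h0
  -- with `ι := 2ζ² - 1` we have `ι² = -3` and `(ζ-1)² = -3·Ym² = (ι·Ym)²`
  have hsplit : ((T - 2) - (2 * (T - 1) ^ 2 - 1) * Ym) *
      ((T - 2) + (2 * (T - 1) ^ 2 - 1) * Ym) = 0 := by
    linear_combination hYm - 4 * Ym ^ 2 * hz
  rcases mul_eq_zero.mp hsplit with he | he
  · -- `ζ - 1 = ι·Ym`, and then `ζ² + 1 = -ι(ζ-1)(ζ+1) = 3·Ym·(ζ+1)`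
    have hdg : r ∣ (t - 1) ^ 2 + 1 - 3 * (y * t) := by
      rw [← AdjoinRoot.mk_eq_zero]
      simp only [map_sub, map_add, map_pow, map_one, map_mul, map_ofNat]
      linear_combination (2 - 4 * Ym * T) * hz - ((2 * (T - 1) ^ 2 - 1) * T) * he
    exact absurd hdg (fun hdg => aux_deg r t y ht0 hy0 h2dn hn2m hdg)
  · -- `ζ - 1 = -ι·Ym`: same with `y` replaced by `-y`
    have hdg : r ∣ (t - 1) ^ 2 + 1 - 3 * (-y * t) := by
      rw [← AdjoinRoot.mk_eq_zero]
      simp only [map_sub, map_add, map_pow, map_one, map_mul, map_ofNat, map_neg]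
      linear_combination (2 + 4 * Ym * T) * hz - ((2 * (T - 1) ^ 2 - 1) * T) * he
    exact absurd hdg (fun hdg =>
      aux_deg r t (-y) ht0 (neg_ne_zero.mpr hy0) h2dn (by rwa [natDegree_neg]) hdg)
end
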